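/- Let ℓ be a learning function with ℓ̲ = ℓ'(1) and ℓ̄ = ℓ'(0), and define Γ(z) = ‖z‖₁·λ(z/‖z‖₁) for z ∈ ℝ_+^K with z ≠ 0 and Γ(0) = 0, where λ(π) = 1/H(π). Then Γ is globally Lipschitz on [0,1]^K with respect to the ℓ¹-norm: for all z, z' ∈ [0,1]^K, |Γ(z) − Γ(z')| ≤ (ℓ̄ + 2ℓ̄³/ℓ̲)·‖z − z'‖₁. -/

import Mathlib

open Finset

noncomputable section

/-- The simplex Δ^{K-1}: nonnegative coordinates summing to 1. -/
def simplex (K : ℕ) : Set (Fin K → ℝ) :=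
  {π | (∀ k, 0 ≤ π k) ∧ ∑ k, π k = 1}

/-- ℓ¹-norm on ℝ^K. -/
def l1 {K : ℕ} (a : Fin K → ℝ) : ℝ := ∑ k, |a k|

/-- Coverage operator C(a,b) = ∑ min(a_k, b_k). -/
def Cov {K : ℕ} (a b : Fin K → ℝ) : ℝ := ∑ k, min (a k) (b k)

/-- A learning function ℓ : [0,∞) → [0,∞): continuous, strictly increasing,
strictly concave, ℓ(0)=0, ℓ(1)=1, continuously differentiable on [0,1]
with derivative `deriv`, ℓ'(1) > 0 (finiteness of ℓ'(0) is automatic). -/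
structure LearningFunction where
  toFun : ℝ → ℝ
  deriv : ℝ → ℝ
  continuousOn : ContinuousOn toFun (Set.Ici 0)
  strictMonoOn : StrictMonoOn toFun (Set.Ici 0)
  strictConcaveOn : StrictConcaveOn ℝ (Set.Ici 0) toFun
  nonneg : ∀ s, 0 ≤ s → 0 ≤ toFun s
  map_zero : toFun 0 = 0
  map_one : toFun 1 = 1
  hasDerivAt : ∀ s ∈ Set.Icc (0:ℝ) 1,
    HasDerivWithinAt toFun (deriv s) (Set.Icc (0:ℝ) 1) s
  derivContinuousOn : ContinuousOn deriv (Set.Icc (0:ℝ) 1)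
  deriv_one_pos : 0 < deriv 1

/-- Maximal feasible scale H(π) = sup { H ≥ 0 : ∑ ℓ(H π_k) ≤ 1 }. -/
def Hscale {K : ℕ} (L : LearningFunction) (π : Fin K → ℝ) : ℝ :=
  sSup {H : ℝ | 0 ≤ H ∧ ∑ k, L.toFun (H * π k) ≤ 1}

/-- Relative inefficiency index λ(π) = 1/H(π). -/
def lam {K : ℕ} (L : LearningFunction) (π : Fin K → ℝ) : ℝ :=
  1 / Hscale L π

/-- Γ(z) = ‖z‖₁ λ(z/‖z‖₁) for z ≠ 0, Γ(0) = 0. -/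
def Gam {K : ℕ} (L : LearningFunction) (z : Fin K → ℝ) : ℝ :=
  if z = 0 then 0 else l1 z * lam L (fun k => z k / l1 z)

/-- Fragmentation index D(π) = 1 - ∑ π_k². -/
def Dfrag {K : ℕ} (π : Fin K → ℝ) : ℝ := 1 - ∑ k, (π k) ^ 2

/-- Lipschitz constant L_Γ = ℓ̄ + 2 ℓ̄³/ℓ̲. -/
def LGam (L : LearningFunction) : ℝ := L.deriv 0 + 2 * L.deriv 0 ^ 3 / L.deriv 1

/-! The Lipschitz bound comes from a one-sided estimate `Γ(z) ≤ Γ(z') + (ℓ̄²/ℓ̲)‖z − z'‖₁` for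
nonnegative bundles. For `z ≠ 0`, `Γ(z)` is the least `t > 0` with `∑ ℓ(z_k/t) ≤ 1`, so it suffices
to check that `t = Γ(z') + (ℓ̄²/ℓ̲)‖z − z'‖₁` satisfies this constraint. Coordinatewise, replacing
`z'_k` by `z_k` costs at most `ℓ̄|z_k − z'_k|/t`, since `ℓ` is `ℓ̄`-Lipschitz on `[0,1]`, while enlarging
the scale from `Γ(z')` to `t` gains at least `ℓ̲ z'_k (1/Γ(z') − 1/t)`, since `ℓ' ≥ ℓ̲` on `[0,1]`.
The gain dominates the cost because `Γ(z') ≤ ℓ̄‖z'‖₁`. -/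

open Set

namespace LearningFunction

variable (L : LearningFunction)

lemma concaveOn_Icc : ConcaveOn ℝ (Icc (0:ℝ) 1) L.toFun :=
  L.strictConcaveOn.concaveOn.subset Icc_subset_Ici_self (convex_Icc 0 1)

lemma deriv_antitoneOn : AntitoneOn L.deriv (Icc (0:ℝ) 1) := by
  intro a ha b hb hab
  rcases hab.eq_or_lt with rfl | h
  · rfl
  · exact ((L.concaveOn_Icc.le_slope_of_hasDerivWithinAt ha hb h (L.hasDerivAt b hb)).trans
      (L.concaveOn_Icc.slope_le_of_hasDerivWithinAt ha hb h (L.hasDerivAt a ha)))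

lemma sub_le_deriv_zero_mul {a b : ℝ} (ha : a ∈ Icc (0:ℝ) 1) (hb : b ∈ Icc (0:ℝ) 1)
    (hab : a ≤ b) : L.toFun b - L.toFun a ≤ L.deriv 0 * (b - a) := by
  rcases hab.eq_or_lt with rfl | h
  · simp
  have hslope := L.concaveOn_Icc.slope_le_of_hasDerivWithinAt ha hb h (L.hasDerivAt a ha)
  rw [slope_def_field, div_le_iff₀ (sub_pos.2 h)] at hslope
  have hderiv := L.deriv_antitoneOn (left_mem_Icc.2 zero_le_one) ha ha.1
  nlinarith

lemma deriv_one_mul_le_sub {a b : ℝ} (ha : a ∈ Icc (0:ℝ) 1) (hb : b ∈ Icc (0:ℝ) 1)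
    (hab : a ≤ b) : L.deriv 1 * (b - a) ≤ L.toFun b - L.toFun a := by
  rcases hab.eq_or_lt with rfl | h
  · simp
  have hslope := L.concaveOn_Icc.le_slope_of_hasDerivWithinAt ha hb h (L.hasDerivAt b hb)
  rw [slope_def_field, le_div_iff₀ (sub_pos.2 h)] at hslope
  have hderiv := L.deriv_antitoneOn hb (right_mem_Icc.2 zero_le_one) hb.2
  nlinarith

lemma one_le_deriv_zero : 1 ≤ L.deriv 0 := by
  simpa [L.map_zero, L.map_one] using
    L.sub_le_deriv_zero_mul (left_mem_Icc.2 zero_le_one) (right_mem_Icc.2 zero_le_one)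
      zero_le_one

lemma deriv_zero_pos : 0 < L.deriv 0 := one_pos.trans_le L.one_le_deriv_zero

lemma deriv_one_le_deriv_zero : L.deriv 1 ≤ L.deriv 0 :=
  L.deriv_antitoneOn (left_mem_Icc.2 zero_le_one) (right_mem_Icc.2 zero_le_one) zero_le_one

lemma deriv_zero_le_sq_div_deriv_one : L.deriv 0 ≤ L.deriv 0 ^ 2 / L.deriv 1 := by
  rw [le_div_iff₀ L.deriv_one_pos, sq]
  exact mul_le_mul_of_nonneg_left L.deriv_one_le_deriv_zero L.deriv_zero_pos.le

lemma apply_le_deriv_zero_mul {x : ℝ} (hx : x ∈ Icc (0:ℝ) 1) : L.toFun x ≤ L.deriv 0 * x := by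
  simpa [L.map_zero] using L.sub_le_deriv_zero_mul (left_mem_Icc.2 zero_le_one) hx hx.1

lemma le_one_of_apply_le_one {x : ℝ} (hx : 0 ≤ x) (h : L.toFun x ≤ 1) : x ≤ 1 := by
  by_contra! hx1
  have := L.strictMonoOn (mem_Ici.2 zero_le_one) (mem_Ici.2 hx) hx1
  rw [L.map_one] at this
  linarith

lemma apply_le_sub_add {a b c : ℝ} (ha : a ∈ Icc (0:ℝ) 1) (hb : b ∈ Icc (0:ℝ) 1)
    (hc : c ∈ Icc (0:ℝ) 1) (hac : a ≤ c) :
    L.toFun b ≤ L.toFun c - L.deriv 1 * (c - a) + L.deriv 0 * |b - a| := by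
  have hdown := L.deriv_one_mul_le_sub ha hc hac
  have hmove : L.toFun b ≤ L.toFun a + L.deriv 0 * |b - a| := by
    rcases le_total b a with hba | hab
    · have := L.strictMonoOn.monotoneOn hb.1 ha.1 hba
      nlinarith [abs_nonneg (b - a), L.deriv_zero_pos]
    · rw [abs_of_nonneg (sub_nonneg.2 hab)]
      linarith [L.sub_le_deriv_zero_mul ha hb hab]
  linarith

end LearningFunction

def feasibleScales {K : ℕ} (L : LearningFunction) (π : Fin K → ℝ) : Set ℝ :=
  {H : ℝ | 0 ≤ H ∧ ∑ k, L.toFun (H * π k) ≤ 1}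

section Hscale

variable {K : ℕ} (L : LearningFunction) {π : Fin K → ℝ}

lemma mul_le_one_of_mem_feasibleScales (hπ : ∀ k, 0 ≤ π k) {H : ℝ}
    (hH : H ∈ feasibleScales L π) (k : Fin K) : H * π k ≤ 1 := by
  have hnonneg : ∀ j, 0 ≤ H * π j := fun j => mul_nonneg hH.1 (hπ j)
  refine L.le_one_of_apply_le_one (hnonneg k) (le_trans ?_ hH.2)
  exact single_le_sum (fun j _ => L.nonneg _ (hnonneg j)) (mem_univ k)

lemma bddAbove_feasibleScales (hπ : π ∈ simplex K) : BddAbove (feasibleScales L π) := by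
  refine ⟨K, fun H hH => ?_⟩
  calc H = ∑ k, H * π k := by rw [← mul_sum, hπ.2, mul_one]
    _ ≤ ∑ _k : Fin K, (1 : ℝ) := sum_le_sum fun k _ => mul_le_one_of_mem_feasibleScales L hπ.1 hH k
    _ = K := by simp

lemma isClosed_feasibleScales (hπ : ∀ k, 0 ≤ π k) : IsClosed (feasibleScales L π) := by
  have hcont : ContinuousOn (fun H => ∑ k, L.toFun (H * π k)) (Ici 0) :=
    continuousOn_finsetSum _ fun k _ =>
      L.continuousOn.comp (continuousOn_id.mul continuousOn_const)
        fun H hH => mem_Ici.2 (mul_nonneg hH (hπ k))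
  exact hcont.preimage_isClosed_of_isClosed isClosed_Ici isClosed_Iic

lemma inv_deriv_zero_mem_feasibleScales (hπ : π ∈ simplex K) :
    1 / L.deriv 0 ∈ feasibleScales L π := by
  have hd := L.deriv_zero_pos
  refine ⟨by positivity, ?_⟩
  have hπ1 : ∀ k, π k ≤ 1 := fun k =>
    hπ.2 ▸ single_le_sum (fun j _ => hπ.1 j) (mem_univ k)
  have hmem : ∀ k, 1 / L.deriv 0 * π k ∈ Icc (0:ℝ) 1 := fun k =>
    ⟨by have := hπ.1 k; positivity,
      by rw [one_div_mul_eq_div, div_le_one hd]; linarith [hπ1 k, L.one_le_deriv_zero]⟩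
  calc ∑ k, L.toFun (1 / L.deriv 0 * π k) ≤ ∑ k, L.deriv 0 * (1 / L.deriv 0 * π k) :=
        sum_le_sum fun k _ => L.apply_le_deriv_zero_mul (hmem k)
    _ = 1 := by simp_rw [← mul_assoc, mul_one_div_cancel hd.ne', one_mul, hπ.2]

lemma Hscale_mem_feasibleScales (hπ : π ∈ simplex K) : Hscale L π ∈ feasibleScales L π :=
  (isClosed_feasibleScales L hπ.1).csSup_mem ⟨_, inv_deriv_zero_mem_feasibleScales L hπ⟩
    (bddAbove_feasibleScales L hπ)

lemma le_Hscale (hπ : π ∈ simplex K) {H : ℝ} (hH : H ∈ feasibleScales L π) : H ≤ Hscale L π :=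
  le_csSup (bddAbove_feasibleScales L hπ) hH

lemma inv_deriv_zero_le_Hscale (hπ : π ∈ simplex K) : 1 / L.deriv 0 ≤ Hscale L π :=
  le_Hscale L hπ (inv_deriv_zero_mem_feasibleScales L hπ)

lemma Hscale_pos (hπ : π ∈ simplex K) : 0 < Hscale L π :=
  (one_div_pos.2 L.deriv_zero_pos).trans_le (inv_deriv_zero_le_Hscale L hπ)

end Hscale

section Gam

variable {K : ℕ} {z z' : Fin K → ℝ}

lemma l1_nonneg (z : Fin K → ℝ) : 0 ≤ l1 z := sum_nonneg fun k _ => abs_nonneg (z k)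

lemma l1_eq_sum (hz : ∀ k, 0 ≤ z k) : l1 z = ∑ k, z k :=
  sum_congr rfl fun k _ => abs_of_nonneg (hz k)

lemma l1_pos (hz : ∀ k, 0 ≤ z k) (hz0 : z ≠ 0) : 0 < l1 z := by
  obtain ⟨k, hk⟩ := Function.ne_iff.1 hz0
  rw [l1_eq_sum hz]
  exact sum_pos' (fun j _ => hz j) ⟨k, mem_univ k, (hz k).lt_of_ne' hk⟩

lemma abs_sub_le_l1_sub (z z' : Fin K → ℝ) (k : Fin K) : |z k - z' k| ≤ l1 (z - z') :=
  single_le_sum (f := fun j => |(z - z') j|) (fun _ _ => abs_nonneg _) (mem_univ k)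

lemma l1_sub_comm (z z' : Fin K → ℝ) : l1 (z - z') = l1 (z' - z) :=
  sum_congr rfl fun k _ => abs_sub_comm (z k) (z' k)

lemma div_l1_mem_simplex (hz : ∀ k, 0 ≤ z k) (hz0 : z ≠ 0) :
    (fun k => z k / l1 z) ∈ simplex K :=
  ⟨fun k => div_nonneg (hz k) (l1_nonneg z),
    by rw [← sum_div, ← l1_eq_sum hz, div_self (l1_pos hz hz0).ne']⟩

variable (L : LearningFunction)

lemma Gam_zero : Gam L (0 : Fin K → ℝ) = 0 := if_pos rfl

lemma Gam_eq_div (hz0 : z ≠ 0) : Gam L z = l1 z / Hscale L (fun k => z k / l1 z) := by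
  rw [Gam, if_neg hz0, lam, mul_one_div]

lemma Gam_le_deriv_zero_mul_l1 (hz : ∀ k, 0 ≤ z k) : Gam L z ≤ L.deriv 0 * l1 z := by
  by_cases hz0 : z = 0
  · simp [hz0, Gam_zero, l1]
  have hH := inv_deriv_zero_le_Hscale L (div_l1_mem_simplex hz hz0)
  rw [Gam_eq_div L hz0, div_le_iff₀ (Hscale_pos L (div_l1_mem_simplex hz hz0))]
  rw [div_le_iff₀ L.deriv_zero_pos] at hH
  nlinarith [l1_nonneg z]

lemma Gam_pos (hz : ∀ k, 0 ≤ z k) (hz0 : z ≠ 0) : 0 < Gam L z := by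
  rw [Gam_eq_div L hz0]
  exact div_pos (l1_pos hz hz0) (Hscale_pos L (div_l1_mem_simplex hz hz0))

lemma sum_apply_div_Gam_le_one (hz : ∀ k, 0 ≤ z k) (hz0 : z ≠ 0) :
    ∑ k, L.toFun (z k / Gam L z) ≤ 1 := by
  have hπ := div_l1_mem_simplex hz hz0
  have hdiv : ∀ k, z k / Gam L z = Hscale L (fun k => z k / l1 z) * (z k / l1 z) := by
    intro k
    have := (l1_pos hz hz0).ne'
    have := (Hscale_pos L hπ).ne'
    rw [Gam_eq_div L hz0]
    field_simp
  simpa only [hdiv] using (Hscale_mem_feasibleScales L hπ).2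

lemma le_Gam (hz : ∀ k, 0 ≤ z k) (hz0 : z ≠ 0) (k : Fin K) : z k ≤ Gam L z := by
  have hΓ := Gam_pos L hz hz0
  rw [← div_le_one hΓ]
  refine L.le_one_of_apply_le_one (div_nonneg (hz k) hΓ.le) ?_
  refine le_trans ?_ (sum_apply_div_Gam_le_one L hz hz0)
  exact single_le_sum (fun j _ => L.nonneg _ (div_nonneg (hz j) hΓ.le)) (mem_univ k)

lemma Gam_le_of_sum_apply_div_le_one (hz : ∀ k, 0 ≤ z k) {t : ℝ} (ht : 0 < t)
    (h : ∑ k, L.toFun (z k / t) ≤ 1) : Gam L z ≤ t := by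
  by_cases hz0 : z = 0
  · simpa [hz0, Gam_zero] using ht.le
  have hπ := div_l1_mem_simplex hz hz0
  have hs := l1_pos hz hz0
  have hfeas : l1 z / t ∈ feasibleScales L (fun k => z k / l1 z) := by
    refine ⟨by positivity, ?_⟩
    convert h using 3 with k
    field_simp
  have := le_Hscale L hπ hfeas
  rw [Gam_eq_div L hz0, div_le_iff₀ (Hscale_pos L hπ)]
  rwa [div_le_iff₀ ht, mul_comm] at this

end Gam

section Lipschitz

variable {K : ℕ} (L : LearningFunction) {z z' : Fin K → ℝ}

lemma sum_apply_div_Gam_add_le_one (hz : ∀ k, 0 ≤ z k) (hz' : ∀ k, 0 ≤ z' k) (hz'0 : z' ≠ 0) :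
    ∑ k, L.toFun (z k / (Gam L z' + L.deriv 0 ^ 2 / L.deriv 1 * l1 (z - z'))) ≤ 1 := by
  set t' := Gam L z'
  set C := L.deriv 0 ^ 2 / L.deriv 1 with hC
  set δ := l1 (z - z')
  set t := t' + C * δ
  have hd0 := L.deriv_zero_pos
  have hd1 := L.deriv_one_pos
  have hCd1 : L.deriv 1 * C = L.deriv 0 ^ 2 := by rw [hC]; field_simp
  have hC1 : 1 ≤ C := L.one_le_deriv_zero.trans L.deriv_zero_le_sq_div_deriv_one
  have ht' : 0 < t' := Gam_pos L hz' hz'0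
  have hδ : 0 ≤ δ := l1_nonneg _
  have ht : 0 < t := by positivity
  have hz't' : ∀ k, z' k ≤ t' := le_Gam L hz' hz'0
  have hcoord : ∀ k, L.toFun (z k / t) ≤
      L.toFun (z' k / t') - L.deriv 1 * (z' k * (1 / t' - 1 / t)) +
        L.deriv 0 * (|z k - z' k| / t) := by
    intro k
    have hzk : z k ≤ t := by
      have := abs_sub_le_l1_sub z z' k
      have := le_abs_self (z k - z' k)
      nlinarith [hz't' k]
    have hmem : ∀ {x s : ℝ}, 0 ≤ x → x ≤ s → 0 < s → x / s ∈ Icc (0:ℝ) 1 :=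
      fun hx hxs hs => ⟨div_nonneg hx hs.le, (div_le_one hs).2 hxs⟩
    have hle : z' k / t ≤ z' k / t' := div_le_div_of_nonneg_left (hz' k) ht' (by nlinarith)
    have := L.apply_le_sub_add (hmem (hz' k) (by nlinarith [hz't' k]) ht)
      (hmem (hz k) hzk ht) (hmem (hz' k) (hz't' k) ht') hle
    have habs : |z k / t - z' k / t| = |z k - z' k| / t := by
      rw [← sub_div, abs_div, abs_of_pos ht]
    rwa [mul_sub, mul_one_div, mul_one_div, ← habs]
  have hgain : L.deriv 0 * (δ / t) ≤ L.deriv 1 * (l1 z' * (1 / t' - 1 / t)) := by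
    have hΓ : t' ≤ L.deriv 0 * l1 z' := Gam_le_deriv_zero_mul_l1 L hz'
    calc L.deriv 0 * (δ / t) = L.deriv 0 * δ * t' / (t' * t) := by field_simp
      _ ≤ L.deriv 0 * δ * (L.deriv 0 * l1 z') / (t' * t) := by gcongr
      _ = L.deriv 1 * (l1 z' * (1 / t' - 1 / t)) := by
        rw [show 1 / t' - 1 / t = C * δ / (t' * t) by field_simp; ring]
        linear_combination (-(δ * l1 z' / (t' * t))) * hCd1
  calc ∑ k, L.toFun (z k / t)
      ≤ ∑ k, (L.toFun (z' k / t') - L.deriv 1 * (z' k * (1 / t' - 1 / t)) +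
          L.deriv 0 * (|z k - z' k| / t)) := sum_le_sum fun k _ => hcoord k
    _ = ∑ k, L.toFun (z' k / t') - L.deriv 1 * (l1 z' * (1 / t' - 1 / t)) +
          L.deriv 0 * (δ / t) := by
        rw [sum_add_distrib, sum_sub_distrib, ← mul_sum, ← mul_sum, ← sum_mul, ← sum_div,
          ← l1_eq_sum hz']
        rfl
    _ ≤ 1 - L.deriv 1 * (l1 z' * (1 / t' - 1 / t)) + L.deriv 0 * (δ / t) := by
        gcongr
        exact sum_apply_div_Gam_le_one L hz' hz'0
    _ ≤ 1 := by linarith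

lemma Gam_le_add (hz : ∀ k, 0 ≤ z k) (hz' : ∀ k, 0 ≤ z' k) :
    Gam L z ≤ Gam L z' + L.deriv 0 ^ 2 / L.deriv 1 * l1 (z - z') := by
  by_cases hz'0 : z' = 0
  · subst hz'0
    rw [Gam_zero, zero_add, sub_zero]
    calc Gam L z ≤ L.deriv 0 * l1 z := Gam_le_deriv_zero_mul_l1 L hz
      _ ≤ L.deriv 0 ^ 2 / L.deriv 1 * l1 z :=
        mul_le_mul_of_nonneg_right L.deriv_zero_le_sq_div_deriv_one (l1_nonneg z)
  refine Gam_le_of_sum_apply_div_le_one L hz ?_ (sum_apply_div_Gam_add_le_one L hz hz' hz'0)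
  have := L.deriv_one_pos
  have := Gam_pos L hz' hz'0
  have := l1_nonneg (z - z')
  positivity

end Lipschitz

/-- Γ is globally Lipschitz on [0,1]^K with constant ℓ̄ + 2ℓ̄³/ℓ̲ in the ℓ¹-norm. -/
theorem Gam_lipschitz {K : ℕ} (L : LearningFunction)
    (z z' : Fin K → ℝ)
    (hz : ∀ k, z k ∈ Set.Icc (0:ℝ) 1) (hz' : ∀ k, z' k ∈ Set.Icc (0:ℝ) 1) :
    |Gam L z - Gam L z'| ≤
      (L.deriv 0 + 2 * L.deriv 0 ^ 3 / L.deriv 1) * l1 (z - z') := by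
  have hC : L.deriv 0 ^ 2 / L.deriv 1 ≤ L.deriv 0 + 2 * L.deriv 0 ^ 3 / L.deriv 1 := by
    have hd0 := L.one_le_deriv_zero
    have hsq : L.deriv 0 ^ 2 / L.deriv 1 ≤ 2 * L.deriv 0 ^ 3 / L.deriv 1 :=
      div_le_div_of_nonneg_right (by nlinarith) L.deriv_one_pos.le
    linarith
  have hδ := mul_le_mul_of_nonneg_right hC (l1_nonneg (z - z'))
  have h₁ := Gam_le_add L (fun k => (hz k).1) (fun k => (hz' k).1)
  have h₂ := Gam_le_add L (fun k => (hz' k).1) (fun k => (hz k).1)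
  rw [l1_sub_comm] at h₂
  rw [abs_sub_le_iff]
  constructor <;> linarith

end
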